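/- Let A be a row circular binary matrix satisfying the standard assumptions, and let v, v' be distinct vertices of Q*(A). Then every node of the joint saturation graph G(v,v') has degree at most 2, and hence every connected component of G(v,v') is either a path (possibly an isolated node) or a cycle. -/

import Mathlib

open Finset

/-- Support of a vector. -/
def supp {n : ℕ} (x : Fin n → ℝ) : Set (Fin n) := {j | x j ≠ 0}

/-- Support of the `t`-th row of a matrix. -/
def rowSupp {m n : ℕ} (A : Matrix (Fin m) (Fin n) ℝ) (t : Fin m) : Set (Fin n) :=
  {j | A t j ≠ 0}

def IsBinaryMatrix {m n : ℕ} (A : Matrix (Fin m) (Fin n) ℝ) : Prop :=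
  ∀ t j, A t j = 0 ∨ A t j = 1

def IsBinaryVec {n : ℕ} (x : Fin n → ℝ) : Prop := ∀ j, x j = 0 ∨ x j = 1

/-- The polyhedron `{x | A x ≥ b, x ≥ 0}`. -/
def polyP {m n : ℕ} (A : Matrix (Fin m) (Fin n) ℝ) (b : Fin m → ℝ) : Set (Fin n → ℝ) :=
  {x | (∀ i, b i ≤ ∑ j, A i j * x j) ∧ ∀ j, 0 ≤ x j}

/-- The linear relaxation `Q(A) = {x | A x ≥ 1, x ≥ 0}`. -/
def polyQ {m n : ℕ} (A : Matrix (Fin m) (Fin n) ℝ) : Set (Fin n → ℝ) :=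
  {x | (∀ i, 1 ≤ ∑ j, A i j * x j) ∧ ∀ j, 0 ≤ x j}

/-- The set covering polyhedron `Q*(A)`: convex hull of nonnegative integer solutions of
`A x ≥ 1`. -/
def Qstar {m n : ℕ} (A : Matrix (Fin m) (Fin n) ℝ) : Set (Fin n → ℝ) :=
  convexHull ℝ {x | (∀ j, ∃ k : ℕ, x j = k) ∧ ∀ i, 1 ≤ ∑ j, A i j * x j}

/-- A vertex of a convex set is an extreme point. -/
def IsVertex {n : ℕ} (S : Set (Fin n → ℝ)) (v : Fin n → ℝ) : Prop :=
  v ∈ S.extremePoints ℝ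

/-- Two distinct vertices are adjacent when they lie on a common edge, i.e. the segment
joining them is a face (extreme subset) of `S`. -/
def AdjacentVerts {n : ℕ} (S : Set (Fin n → ℝ)) (v w : Fin n → ℝ) : Prop :=
  v ≠ w ∧ IsVertex S v ∧ IsVertex S w ∧ IsExtreme ℝ S (segment ℝ v w)

/-- There is a row support `C` with `C ∩ supp v = {p}` and `C ∩ supp v' = {p'}`. -/
def jsgEdge {m n : ℕ} (A : Matrix (Fin m) (Fin n) ℝ) (v v' : Fin n → ℝ)
    (p p' : Fin n) : Prop :=
  ∃ t, rowSupp A t ∩ supp v = {p} ∧ rowSupp A t ∩ supp v' = {p'}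

/-- The joint saturation graph of `v` and `v'` with respect to `A`. -/
def JSG {m n : ℕ} (A : Matrix (Fin m) (Fin n) ℝ) (v v' : Fin n → ℝ) :
    SimpleGraph (Fin n) where
  Adj p p' := p ≠ p' ∧ (jsgEdge A v v' p p' ∨ jsgEdge A v v' p' p)
  symm := by constructor; intro p p' h; exact ⟨h.1.symm, h.2.symm⟩
  loopless := by constructor; intro p h; exact h.1 rfl

/-- The node set of the joint saturation graph: the symmetric difference of the supports. -/
def jsgNodes {n : ℕ} (v v' : Fin n → ℝ) : Set (Fin n) :=
  (supp v \ supp v') ∪ (supp v' \ supp v)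

def JSGConnected {m n : ℕ} (A : Matrix (Fin m) (Fin n) ℝ) (v v' : Fin n → ℝ) : Prop :=
  ∀ p ∈ jsgNodes v v', ∀ q ∈ jsgNodes v v', (JSG A v v').Reachable p q

/-- One of the two partite sets is contained in a single connected component. -/
def JSGPartiteConnected {m n : ℕ} (A : Matrix (Fin m) (Fin n) ℝ) (v v' : Fin n → ℝ) : Prop :=
  (∀ p ∈ supp v \ supp v', ∀ q ∈ supp v \ supp v', (JSG A v v').Reachable p q) ∨
  (∀ p ∈ supp v' \ supp v, ∀ q ∈ supp v' \ supp v, (JSG A v v').Reachable p q)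

/-- Exactly two components, one of which is an isolated node. -/
def JSGAlmostConnected {m n : ℕ} (A : Matrix (Fin m) (Fin n) ℝ) (v v' : Fin n → ℝ) : Prop :=
  ∃ q ∈ jsgNodes v v', (∀ p, ¬ (JSG A v v').Adj q p) ∧ (jsgNodes v v' \ {q}).Nonempty ∧
    ∀ p ∈ jsgNodes v v' \ {q}, ∀ r ∈ jsgNodes v v' \ {q}, (JSG A v v').Reachable p r

open Fin.NatCast in
/-- The (directed) circular arc from `i` to `j` in `Fin n`. -/
def arc {n : ℕ} [NeZero n] (i j : Fin n) : Set (Fin n) :=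
  {k | ∃ h : ℕ, h ≤ ((j - i : Fin n) : ℕ) ∧ k = i + (h : Fin n)}

/-- A matrix is row circular if each row support is a circular arc. -/
def RowCircular {m n : ℕ} [NeZero n] (A : Matrix (Fin m) (Fin n) ℝ) : Prop :=
  ∀ t, ∃ i j : Fin n, rowSupp A t = arc i j

/-- The standard assumptions: binary, no dominating rows, between 2 and n-1 ones per row,
no all-zero or all-one column. -/
def StandardAssumptions {m n : ℕ} (A : Matrix (Fin m) (Fin n) ℝ) : Prop :=
  IsBinaryMatrix A ∧
  (∀ s t : Fin m, s ≠ t → ¬ rowSupp A s ⊆ rowSupp A t) ∧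
  (∀ t, 2 ≤ (rowSupp A t).ncard ∧ (rowSupp A t).ncard ≤ n - 1) ∧
  (∀ j : Fin n, (∃ t, A t j ≠ 0) ∧ (∃ t, A t j = 0))

/-- `a` and `b` occur consecutively (in either order) in the list `l`. -/
def ListConsec {α : Type*} (l : List α) (a b : α) : Prop :=
  ∃ k : ℕ, (l[k]? = some a ∧ l[k+1]? = some b) ∨ (l[k]? = some b ∧ l[k+1]? = some a)

/-- `a` and `b` occur cyclically consecutively (in either order) in the list `l`. -/
def CycConsec {α : Type*} (l : List α) (a b : α) : Prop :=
  ∃ k : ℕ, k < l.length ∧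
    ((l[k]? = some a ∧ l[(k+1) % l.length]? = some b) ∨
     (l[k]? = some b ∧ l[(k+1) % l.length]? = some a))

/-- The set `S` induces a path (possibly a single node) in `G`. -/
def IsPathOn {n : ℕ} (G : SimpleGraph (Fin n)) (S : Set (Fin n)) : Prop :=
  ∃ l : List (Fin n), l.Nodup ∧ (∀ x, x ∈ S ↔ x ∈ l) ∧
    (∀ a b, a ∈ S → G.Adj a b → ListConsec l a b) ∧
    (∀ a b, ListConsec l a b → G.Adj a b)

/-- The set `S` induces a cycle in `G`. -/
def IsCycleOn {n : ℕ} (G : SimpleGraph (Fin n)) (S : Set (Fin n)) : Prop :=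
  ∃ l : List (Fin n), 3 ≤ l.length ∧ l.Nodup ∧ (∀ x, x ∈ S ↔ x ∈ l) ∧
    (∀ a b, a ∈ S → G.Adj a b → CycConsec l a b) ∧
    (∀ a b, CycConsec l a b → G.Adj a b)

/-- `p` and `q` are cyclically consecutive elements of `S`. -/
def CyclConsecIn {n : ℕ} [NeZero n] (S : Set (Fin n)) (p q : Fin n) : Prop :=
  p ≠ q ∧ p ∈ S ∧ q ∈ S ∧ (arc p q ∩ S = {p, q} ∨ arc q p ∩ S = {p, q})

/-- The circulant matrix `C(n,2)` with row supports `{t, t+1}` (mod n). -/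
def Cn2 (n : ℕ) [NeZero n] : Matrix (Fin n) (Fin n) ℝ :=
  fun t j => if j = t ∨ j = t + 1 then 1 else 0

/-- Append a row to a matrix. -/
def appendRow {m n : ℕ} (A : Matrix (Fin m) (Fin n) ℝ) (a : Fin n → ℝ) :
    Matrix (Fin (m+1)) (Fin n) ℝ :=
  fun t j => if h : (t : ℕ) < m then A ⟨t, h⟩ j else a j

/-- A set of points is integral if all its extreme points are integer vectors. -/
def IsIntegralSet {n : ℕ} (S : Set (Fin n → ℝ)) : Prop :=
  ∀ x ∈ S.extremePoints ℝ, ∀ j, ∃ z : ℤ, x j = z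

/-- A binary matrix is minimally nonideal if `Q(A)` is not integral but both restrictions
`Q(A) ∩ {x_i = 0}` and `Q(A) ∩ {x_i = 1}` are integral for every coordinate `i`. -/
def MinimallyNonideal {m n : ℕ} (A : Matrix (Fin m) (Fin n) ℝ) : Prop :=
  ¬ IsIntegralSet (polyQ A) ∧
  ∀ i : Fin n, IsIntegralSet (polyQ A ∩ {x | x i = 0}) ∧
               IsIntegralSet (polyQ A ∩ {x | x i = 1})

/-- The matrix of the degenerate projective plane with `t+1` points and lines. -/
def Jmat (t : ℕ) : Matrix (Fin (t+1)) (Fin (t+1)) ℝ :=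
  fun i j => if i = 0 then (if j = 0 then 0 else 1) else (if j = 0 ∨ j = i then 1 else 0)

/-- `A` is isomorphic to some degenerate projective plane matrix `J_t`, `t ≥ 2`. -/
def IsoToDegenProjPlane {m n : ℕ} (A : Matrix (Fin m) (Fin n) ℝ) : Prop :=
  ∃ t : ℕ, 2 ≤ t ∧ ∃ (σ : Fin m ≃ Fin (t+1)) (τ : Fin n ≃ Fin (t+1)),
    ∀ i j, A i j = Jmat t (σ i) (τ j)

/-- `A₁` is the core of `A`: a square nonsingular row submatrix with `r` ones per row and
per column, all other rows of `A` having more than `r` ones. -/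
def IsCore {m n : ℕ} (A : Matrix (Fin m) (Fin n) ℝ) (A₁ : Matrix (Fin n) (Fin n) ℝ)
    (r : ℕ) : Prop :=
  2 ≤ r ∧ A₁.det ≠ 0 ∧
  (∃ f : Fin n → Fin m, Function.Injective f ∧ (∀ i, A₁ i = A (f i)) ∧
    ∀ t, t ∉ Set.range f → r < (rowSupp A t).ncard) ∧
  (∀ i, (rowSupp A₁ i).ncard = r) ∧ (∀ j, {i | A₁ i j ≠ 0}.ncard = r)

/-- `B₁` is the core of the blocker of `A`: a square nonsingular matrix whose rows are
binary vertices of `Q*(A)` with `s` ones per row and per column, all other binary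
vertices of `Q*(A)` having more than `s` ones. -/
def IsBlockerCore {m n : ℕ} (A : Matrix (Fin m) (Fin n) ℝ) (B₁ : Matrix (Fin n) (Fin n) ℝ)
    (s : ℕ) : Prop :=
  2 ≤ s ∧ B₁.det ≠ 0 ∧
  (∀ i, IsBinaryVec (B₁ i) ∧ IsVertex (Qstar A) (B₁ i)) ∧
  Function.Injective (fun i => B₁ i) ∧
  (∀ i, (rowSupp B₁ i).ncard = s) ∧ (∀ j, {i | B₁ i j ≠ 0}.ncard = s) ∧
  (∀ x, IsBinaryVec x → IsVertex (Qstar A) x → (∀ i, x ≠ B₁ i) → s < (supp x).ncard)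

/-- `w^i` for `n = 3ν`: the complement of the characteristic vector of the residue class
`i` mod 3. -/
def wVec (n : ℕ) (i : Fin 3) : Fin n → ℝ :=
  fun k => if (k : ℕ) % 3 = (i : ℕ) then 0 else 1

/-- `a^i` for `n = 3ν`: the characteristic vector of the residue class `i` mod 3
(`a¹ = (1,0,0,1,0,0,…)` corresponds to `i = 0`). -/
def aVec (n : ℕ) (i : ℕ) : Fin n → ℝ :=
  fun k => if (k : ℕ) % 3 = i then 1 else 0

/-!
If `p` and `q` are adjacent through a row whose support is the arc `C`, then (say) `p ∈ C` and
`C ∩ supp v' = {q}`, so no point of `supp v'` lies between `p` and `q` along `C`: `q` is the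
point of `supp v'` nearest to `p` either clockwise or counterclockwise. Which of `supp v`,
`supp v'` plays this role depends only on `p`, so `p` has at most two neighbours.

In a graph of maximum degree two, a longest simple path through `p` is closed under adjacency,
hence spans the component of `p`. Every edge of the component joins consecutive vertices of the
path, except possibly one edge joining its two ends; the component is a path or a cycle
accordingly.
-/

section Arcs

open Fin.NatCast Fin.CommRing

variable {n : ℕ} [NeZero n]

lemma mem_arc_iff {i j k : Fin n} : k ∈ arc i j ↔ (k - i).val ≤ (j - i).val := by
  constructor
  · rintro ⟨h, hh, rfl⟩
    rwa [add_sub_cancel_left, Fin.val_cast_of_lt (hh.trans_lt (j - i).is_lt)]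
  · exact fun hk => ⟨(k - i).val, hk, by rw [Fin.cast_val_eq_self, add_sub_cancel]⟩

lemma val_sub_eq_add_of_lt {a b c : Fin n} (h : (a - b).val + (b - c).val < n) :
    (a - c).val = (a - b).val + (b - c).val := by
  rw [← sub_add_sub_cancel a b c, Fin.val_add, Nat.mod_eq_of_lt h]

lemma arc_subset_arc {i j p q : Fin n} (hq : q ∈ arc i j)
    (hpq : (p - i).val ≤ (q - i).val) : arc p q ⊆ arc i j := by
  intro r hr
  rw [mem_arc_iff] at hq hr ⊢
  rw [← sub_sub_sub_cancel_right q p i, Fin.sub_val_of_le hpq] at hr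
  rw [val_sub_eq_add_of_lt (by omega : (r - p).val + (p - i).val < n)]
  omega

lemma isMinOn_of_arc_subset_of_inter_eq {C T : Set (Fin n)} {p q : Fin n}
    (hC : arc p q ⊆ C) (hCT : C ∩ T = {q}) : IsMinOn (fun r => (r - p).val) T q := by
  refine isMinOn_iff.2 fun r hr => ?_
  by_contra! hlt
  have hrq : r = q := (hCT ▸ ⟨hC (mem_arc_iff.2 hlt.le), hr⟩ : r ∈ ({q} : Set (Fin n)))
  exact hlt.ne (congrArg (fun r => (r - p).val) hrq)

lemma isMinOn_of_arc_subset_of_inter_eq' {C T : Set (Fin n)} {p q : Fin n}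
    (hC : arc q p ⊆ C) (hCT : C ∩ T = {q}) : IsMinOn (fun r => (p - r).val) T q := by
  refine isMinOn_iff.2 fun r hr => ?_
  by_contra! hlt
  have hrq : r ∈ arc q p := by
    rw [mem_arc_iff, ← sub_sub_sub_cancel_left q r p, Fin.sub_val_of_le hlt.le]
    exact Nat.sub_le _ _
  replace hrq : r = q := (hCT ▸ ⟨hC hrq, hr⟩ : r ∈ ({q} : Set (Fin n)))
  exact hlt.ne (congrArg (fun r => (p - r).val) hrq)

lemma isMinOn_of_mem_arc_of_inter_eq {i j p q : Fin n} {T : Set (Fin n)} (hp : p ∈ arc i j)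
    (hT : arc i j ∩ T = {q}) :
    IsMinOn (fun r => (r - p).val) T q ∨ IsMinOn (fun r => (p - r).val) T q := by
  have hq : q ∈ arc i j := (Set.singleton_subset_iff.1 hT.ge).1
  rcases le_total (p - i).val (q - i).val with hpq | hqp
  · exact .inl (isMinOn_of_arc_subset_of_inter_eq (arc_subset_arc hq hpq) hT)
  · exact .inr (isMinOn_of_arc_subset_of_inter_eq' (arc_subset_arc hp hqp) hT)

lemma subsingleton_isMinOn_of_injective {α β : Type*} [PartialOrder β] {f : α → β}
    (hf : Function.Injective f) (T : Set α) : {q ∈ T | IsMinOn f T q}.Subsingleton :=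
  fun _ ⟨ha, hfa⟩ _ ⟨hb, hfb⟩ => hf ((isMinOn_iff.1 hfa _ hb).antisymm (isMinOn_iff.1 hfb _ ha))

lemma ncard_le_two_of_forall_arc_inter_eq {T s : Set (Fin n)} {p : Fin n}
    (hs : ∀ q ∈ s, ∃ i j, p ∈ arc i j ∧ arc i j ∩ T = {q}) : s.ncard ≤ 2 := by
  set fwd := {q ∈ T | IsMinOn (fun r => (r - p).val) T q}
  set bwd := {q ∈ T | IsMinOn (fun r => (p - r).val) T q}
  have hsub : s ⊆ fwd ∪ bwd := by
    intro q hq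
    obtain ⟨i, j, hp, hT⟩ := hs q hq
    have hqT : q ∈ T := (Set.singleton_subset_iff.1 hT.ge).2
    exact (isMinOn_of_mem_arc_of_inter_eq hp hT).imp (⟨hqT, ·⟩) (⟨hqT, ·⟩)
  have hfwd : fwd.ncard ≤ 1 := Set.ncard_le_one_iff_subsingleton.2 <|
    subsingleton_isMinOn_of_injective (Fin.val_injective.comp (sub_left_injective (b := p))) T
  have hbwd : bwd.ncard ≤ 1 := Set.ncard_le_one_iff_subsingleton.2 <|
    subsingleton_isMinOn_of_injective (Fin.val_injective.comp (sub_right_injective (b := p))) T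
  calc s.ncard ≤ (fwd ∪ bwd).ncard := Set.ncard_le_ncard hsub
    _ ≤ fwd.ncard + bwd.ncard := Set.ncard_union_le _ _
    _ ≤ 2 := by omega

end Arcs

lemma JSG.exists_row_of_adj {m n : ℕ} {A : Matrix (Fin m) (Fin n) ℝ} {v v' : Fin n → ℝ}
    {p q : Fin n} (h : (JSG A v v').Adj p q) :
    ∃ t, p ∈ rowSupp A t ∧ (p ∉ supp v' ∧ rowSupp A t ∩ supp v' = {q} ∨
      p ∈ supp v' ∧ rowSupp A t ∩ supp v = {q}) := by
  obtain ⟨hpq, ⟨t, hv, hv'⟩ | ⟨t, hv, hv'⟩⟩ := h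
  · have hp : p ∈ rowSupp A t ∩ supp v := Set.singleton_subset_iff.1 hv.ge
    refine ⟨t, hp.1, .inl ⟨fun hp' => hpq ?_, hv'⟩⟩
    exact (hv' ▸ ⟨hp.1, hp'⟩ : p ∈ ({q} : Set (Fin n)))
  · have hp : p ∈ rowSupp A t ∩ supp v' := Set.singleton_subset_iff.1 hv'.ge
    exact ⟨t, hp.1, .inr ⟨hp.2, hv⟩⟩

lemma JSG.ncard_adj_le_two {m n : ℕ} [NeZero n] {A : Matrix (Fin m) (Fin n) ℝ}
    (hcirc : RowCircular A) (v v' : Fin n → ℝ) (p : Fin n) :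
    {q | (JSG A v v').Adj p q}.ncard ≤ 2 := by
  by_cases hp : p ∈ supp v'
  · refine ncard_le_two_of_forall_arc_inter_eq (T := supp v) (p := p) fun q hq => ?_
    obtain ⟨t, hpt, ⟨hp', -⟩ | ⟨-, hT⟩⟩ := JSG.exists_row_of_adj hq
    · exact absurd hp hp'
    obtain ⟨i, j, hij⟩ := hcirc t
    exact ⟨i, j, hij ▸ hpt, hij ▸ hT⟩
  · refine ncard_le_two_of_forall_arc_inter_eq (T := supp v') (p := p) fun q hq => ?_
    obtain ⟨t, hpt, ⟨-, hT⟩ | ⟨hp', -⟩⟩ := JSG.exists_row_of_adj hq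
    · obtain ⟨i, j, hij⟩ := hcirc t
      exact ⟨i, j, hij ▸ hpt, hij ▸ hT⟩
    · exact absurd hp' hp

section Consecutive

variable {α : Type*} {l : List α} {a b : α}

lemma ListConsec.symm (h : ListConsec l a b) : ListConsec l b a :=
  let ⟨k, hk⟩ := h; ⟨k, hk.symm⟩

lemma listConsec_getElem {k : ℕ} (hk : k + 1 < l.length) : ListConsec l l[k] l[k + 1] :=
  ⟨k, .inl ⟨List.getElem?_eq_getElem _, List.getElem?_eq_getElem _⟩⟩

lemma ListConsec.adj {G : SimpleGraph α} (hch : l.IsChain G.Adj) (h : ListConsec l a b) :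
    G.Adj a b := by
  obtain ⟨k, ⟨ha, hb⟩ | ⟨hb, ha⟩⟩ := h
  · obtain ⟨hk, rfl⟩ := List.getElem?_eq_some_iff.1 hb
    obtain ⟨_, rfl⟩ := List.getElem?_eq_some_iff.1 ha
    exact List.isChain_iff_getElem.1 hch k hk
  · obtain ⟨hk, rfl⟩ := List.getElem?_eq_some_iff.1 ha
    obtain ⟨_, rfl⟩ := List.getElem?_eq_some_iff.1 hb
    exact (List.isChain_iff_getElem.1 hch k hk).symm

lemma ListConsec.cycConsec (h : ListConsec l a b) : CycConsec l a b := by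
  obtain ⟨k, hk⟩ := h
  have hlt : k + 1 < l.length := by
    rcases hk with ⟨-, h⟩ | ⟨-, h⟩ <;> exact (List.getElem?_eq_some_iff.1 h).1
  exact ⟨k, by omega, by rwa [Nat.mod_eq_of_lt hlt]⟩

lemma cycConsec_of_sym2_eq (hl : 0 < l.length) (h : s(a, b) = s(l[l.length - 1], l[0])) :
    CycConsec l a b := by
  have hwrap : (l.length - 1 + 1) % l.length = 0 := by
    rw [Nat.sub_add_cancel hl, Nat.mod_self]
  refine ⟨l.length - 1, by omega, ?_⟩
  rw [hwrap, List.getElem?_eq_getElem (by omega), List.getElem?_eq_getElem hl]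
  rcases Sym2.eq_iff.1 h with ⟨rfl, rfl⟩ | ⟨rfl, rfl⟩
  · exact .inl ⟨rfl, rfl⟩
  · exact .inr ⟨rfl, rfl⟩

lemma CycConsec.listConsec_or_sym2_eq (h : CycConsec l a b) :
    ListConsec l a b ∨ ∃ hl : 0 < l.length, s(a, b) = s(l[l.length - 1], l[0]) := by
  obtain ⟨k, hk, hab⟩ := h
  rcases Nat.lt_or_ge (k + 1) l.length with hlt | hge
  · rw [Nat.mod_eq_of_lt hlt] at hab
    exact .inl ⟨k, hab⟩
  obtain rfl : k = l.length - 1 := by omega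
  rw [Nat.sub_add_cancel (by omega), Nat.mod_self] at hab
  refine .inr ⟨by omega, ?_⟩
  rcases hab with ⟨ha, hb⟩ | ⟨hb, ha⟩ <;>
    rw [List.getElem?_eq_getElem (by omega), Option.some_inj] at ha hb <;>
    subst ha hb
  · rfl
  · exact Sym2.eq_swap

end Consecutive

section MaxDegreeTwo

variable {V : Type*} {G : SimpleGraph V}

lemma SimpleGraph.Reachable.mem_of_forall_adj_mem {s : Set V}
    (hs : ∀ x ∈ s, ∀ z, G.Adj x z → z ∈ s) {p q : V} (hp : p ∈ s) (h : G.Reachable p q) :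
    q ∈ s := by
  obtain ⟨w⟩ := h
  induction w with
  | nil => exact hp
  | cons hadj _ ih => exact ih (hs _ hp _ hadj)

lemma eq_or_eq_of_adj_of_ncard_le_two [Finite V] {y u w z : V}
    (hdeg : {q | G.Adj y q}.ncard ≤ 2) (hu : G.Adj y u) (hw : G.Adj y w) (huw : u ≠ w)
    (hz : G.Adj y z) : z = u ∨ z = w := by
  by_contra! h
  have := (Set.two_lt_ncard_iff (s := {q | G.Adj y q}) (Set.toFinite _)).2
    ⟨u, w, z, hu, hw, hz, huw, h.1.symm, h.2.symm⟩
  omega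

section Chain

variable [Finite V] {l : List V}

lemma eq_or_eq_of_adj_getElem (hdeg : ∀ y, {q | G.Adj y q}.ncard ≤ 2) (hnd : l.Nodup)
    (hch : l.IsChain G.Adj) {k : ℕ} (hk0 : 0 < k) (hk : k + 1 < l.length) {z : V}
    (hz : G.Adj l[k] z) : z = l[k - 1] ∨ z = l[k + 1] := by
  have hprev : G.Adj l[k] l[k - 1] := by
    have := List.isChain_iff_getElem.1 hch (k - 1) (by omega)
    simp only [Nat.sub_add_cancel hk0] at this
    exact this.symm
  refine eq_or_eq_of_adj_of_ncard_le_two (hdeg _) hprev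
    (List.isChain_iff_getElem.1 hch k hk) ?_ hz
  rw [Ne, hnd.getElem_inj_iff]
  omega

lemma eq_add_one_or_of_adj_getElem (hdeg : ∀ y, {q | G.Adj y q}.ncard ≤ 2) (hnd : l.Nodup)
    (hch : l.IsChain G.Adj) {k k' : ℕ} (hkk' : k < k') (hk' : k' < l.length)
    (hadj : G.Adj l[k] l[k']) : k' = k + 1 ∨ k = 0 ∧ k' = l.length - 1 ∧ 3 ≤ l.length := by
  by_contra! h
  rcases Nat.lt_or_ge (k' + 1) l.length with hlt | hge
  · have := eq_or_eq_of_adj_getElem hdeg hnd hch (by omega) hlt hadj.symm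
    simp only [hnd.getElem_inj_iff] at this
    omega
  · have := eq_or_eq_of_adj_getElem hdeg hnd hch (k := k) (by omega) (by omega) hadj
    simp only [hnd.getElem_inj_iff] at this
    omega

lemma listConsec_or_sym2_eq_of_adj (hdeg : ∀ y, {q | G.Adj y q}.ncard ≤ 2) (hnd : l.Nodup)
    (hch : l.IsChain G.Adj) {a b : V} (ha : a ∈ l) (hb : b ∈ l) (hab : G.Adj a b) :
    ListConsec l a b ∨ ∃ hl : 3 ≤ l.length, s(a, b) = s(l[l.length - 1], l[0]) := by
  obtain ⟨k, hk, rfl⟩ := List.getElem_of_mem ha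
  obtain ⟨k', hk', rfl⟩ := List.getElem_of_mem hb
  wlog hlt : k < k' generalizing k k'
  · have hne : k ≠ k' := by rintro rfl; exact hab.ne rfl
    rcases this k' hk' (List.getElem_mem _) k hk (List.getElem_mem _) hab.symm (by omega)
      with h | ⟨hl, h⟩
    · exact .inl h.symm
    · exact .inr ⟨hl, Sym2.eq_swap.trans h⟩
  rcases eq_add_one_or_of_adj_getElem hdeg hnd hch hlt hk' hab with rfl | ⟨rfl, rfl, hl⟩
  · exact .inl (listConsec_getElem hk')
  · exact .inr ⟨hl, Sym2.eq_swap⟩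

end Chain

lemma exists_nodup_isChain_closed [Fintype V] (hdeg : ∀ y, {q | G.Adj y q}.ncard ≤ 2)
    (p : V) : ∃ l : List V, p ∈ l ∧ l.Nodup ∧ l.IsChain G.Adj ∧ (∀ x ∈ l, G.Reachable p x) ∧
      ∀ x ∈ l, ∀ z, G.Adj x z → z ∈ l := by
  set P := {l : List V | p ∈ l ∧ l.Nodup ∧ l.IsChain G.Adj ∧ ∀ x ∈ l, G.Reachable p x}
  have hfin : P.Finite :=
    (List.finite_length_le V (Fintype.card V)).subset fun l hl => hl.2.1.length_le_card
  have hp : [p] ∈ P := by simp [P]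
  obtain ⟨l, ⟨hpl, hnd, hch, hreach⟩, hmax⟩ := Set.exists_max_image P List.length hfin ⟨_, hp⟩
  refine ⟨l, hpl, hnd, hch, hreach, fun x hx z hxz => ?_⟩
  by_contra hz
  have hzr : G.Reachable p z := (hreach x hx).trans hxz.reachable
  obtain ⟨k, hk, rfl⟩ := List.getElem_of_mem hx
  by_cases hk0 : k = 0
  · subst hk0
    have hcons : z :: l ∈ P := by
      refine ⟨List.mem_cons_of_mem _ hpl, List.nodup_cons.2 ⟨hz, hnd⟩, ?_,
        List.forall_mem_cons.2 ⟨hzr, hreach⟩⟩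
      refine List.isChain_cons.2 ⟨fun y hy => ?_, hch⟩
      rw [List.head?_eq_getElem?, List.getElem?_eq_getElem hk, Option.mem_some_iff] at hy
      exact hy ▸ hxz.symm
    simpa using hmax _ hcons
  by_cases hkL : k = l.length - 1
  · subst hkL
    have happ : l ++ [z] ∈ P := by
      refine ⟨List.mem_append_left _ hpl, ?_, ?_, ?_⟩
      · simpa [List.nodup_append, hnd] using fun a ha (h : a = z) => hz (h ▸ ha)
      · refine List.isChain_append.2 ⟨hch, List.isChain_singleton z, fun y hy w hw => ?_⟩
        rw [List.getLast?_eq_getElem?, List.getElem?_eq_getElem hk, Option.mem_some_iff] at hy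
        rw [List.head?_cons, Option.mem_some_iff] at hw
        exact hy ▸ hw ▸ hxz
      · simpa [or_imp, forall_and] using ⟨hreach, hzr⟩
    simpa using hmax _ happ
  · rcases eq_or_eq_of_adj_getElem hdeg hnd hch (by omega) (by omega) hxz with rfl | rfl <;>
      exact hz (List.getElem_mem _)

end MaxDegreeTwo

lemma isPathOn_or_isCycleOn_of_ncard_le_two {n : ℕ} (G : SimpleGraph (Fin n))
    (hdeg : ∀ y, {q | G.Adj y q}.ncard ≤ 2) (p : Fin n) :
    IsPathOn G {q | G.Reachable p q} ∨ IsCycleOn G {q | G.Reachable p q} := by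
  obtain ⟨l, hpl, hnd, hch, hreach, hclosed⟩ := exists_nodup_isChain_closed hdeg p
  have hmem : ∀ x, x ∈ {q | G.Reachable p q} ↔ x ∈ l := fun x =>
    ⟨fun hx => SimpleGraph.Reachable.mem_of_forall_adj_mem hclosed hpl hx, hreach x⟩
  by_cases hpath : ∀ a ∈ l, ∀ b, G.Adj a b → ListConsec l a b
  · exact .inl ⟨l, hnd, hmem, fun a b ha => hpath a ((hmem a).1 ha) b, fun a b h => h.adj hch⟩
  push Not at hpath
  obtain ⟨a, ha, b, hab, hnot⟩ := hpath
  obtain ⟨hl, hend⟩ :=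
    (listConsec_or_sym2_eq_of_adj hdeg hnd hch ha (hclosed a ha b hab) hab).resolve_left hnot
  have hwrap : G.Adj l[l.length - 1] l[0] := by
    rw [← SimpleGraph.mem_edgeSet, ← hend]
    exact hab
  refine .inr ⟨l, hl, hnd, hmem, fun c d hc hcd => ?_, fun c d h => ?_⟩
  · have hc : c ∈ l := (hmem c).1 hc
    rcases listConsec_or_sym2_eq_of_adj hdeg hnd hch hc (hclosed c hc d hcd) hcd with h | ⟨_, h⟩
    · exact h.cycConsec
    · exact cycConsec_of_sym2_eq (by omega) h
  · rcases h.listConsec_or_sym2_eq with h | ⟨_, h⟩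
    · exact h.adj hch
    · rw [← SimpleGraph.mem_edgeSet, h]
      exact hwrap

theorem stmt6_general {m n : ℕ} [NeZero n] (A : Matrix (Fin m) (Fin n) ℝ)
    (hcirc : RowCircular A)
    (v v' : Fin n → ℝ) :
    (∀ p : Fin n, {q | (JSG A v v').Adj p q}.ncard ≤ 2) ∧
      ∀ p ∈ jsgNodes v v',
        IsPathOn (JSG A v v') {q | (JSG A v v').Reachable p q} ∨
        IsCycleOn (JSG A v v') {q | (JSG A v v').Reachable p q} :=
  ⟨JSG.ncard_adj_le_two hcirc v v', fun p _ =>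
    isPathOn_or_isCycleOn_of_ncard_le_two _ (JSG.ncard_adj_le_two hcirc v v') p⟩

/-- for row circular `A`, every node of the joint saturation graph has
degree at most 2, hence every connected component is a path (possibly an isolated
node) or a cycle. -/
theorem stmt6 {m n : ℕ} [NeZero n] (A : Matrix (Fin m) (Fin n) ℝ)
    (hstd : StandardAssumptions A) (hcirc : RowCircular A)
    (v v' : Fin n → ℝ) (hne : v ≠ v')
    (hv : IsVertex (Qstar A) v) (hv' : IsVertex (Qstar A) v') :
    (∀ p : Fin n, {q | (JSG A v v').Adj p q}.ncard ≤ 2) ∧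
      ∀ p ∈ jsgNodes v v',
        IsPathOn (JSG A v v') {q | (JSG A v v').Reachable p q} ∨
        IsCycleOn (JSG A v v') {q | (JSG A v v').Reachable p q} :=
  stmt6_general A hcirc v v'
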